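/- arXiv:1307.0366 — 3 statements merged into one kernel-verified Lean document; each statement's English description precedes it below -/
import Mathlib

section
/- In a DAG G with topological ordering π, any two non-adjacent vertices π(i) and π(j) with i < j are d-separated by the set {π(1),...,π(j-1)} \ {π(i)} (i.e., by all predecessors of π(j) other than π(i)). -/
open scoped Classical

/-- A directed acyclic graph on `Fin p`: a finite edge set together with a
topological ordering witnessing acyclicity. -/
structure DAG (p : ℕ) where
  edges : Finset (Fin p × Fin p)
  acyclic : ∃ σ : Equiv.Perm (Fin p), ∀ e ∈ edges, σ.symm e.1 < σ.symm e.2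

namespace DAG

variable {p : ℕ}

def edgeRel (G : DAG p) (a b : Fin p) : Prop := (a, b) ∈ G.edges

/-- adjacency in the skeleton -/
def adj (G : DAG p) (a b : Fin p) : Prop := (a, b) ∈ G.edges ∨ (b, a) ∈ G.edges

/-- the skeleton as a finite set of unordered pairs -/
def skeleton (G : DAG p) : Finset (Sym2 (Fin p)) := G.edges.image (fun e => s(e.1, e.2))

/-- `b` is a collider on a path segment `a - b - c`. -/
def isCollider (G : DAG p) (a b c : Fin p) : Prop := (a, b) ∈ G.edges ∧ (c, b) ∈ G.edges

/-- `b` is in `S` or an ancestor of some element of `S`. -/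
def ancestorOfSet (G : DAG p) (b : Fin p) (S : Finset (Fin p)) : Prop :=
  ∃ s ∈ S, Relation.ReflTransGen G.edgeRel b s

/-- a (simple, undirected) path from `i` to `j` in the skeleton, as a list of vertices -/
def IsTrail (G : DAG p) (i j : Fin p) (l : List (Fin p)) : Prop :=
  l.Chain' G.adj ∧ l.Nodup ∧ 2 ≤ l.length ∧ l.head? = some i ∧ l.getLast? = some j

/-- the path `l` d-connects its endpoints given `S`: every collider on it is in `S` or
has a descendant in `S`, and every non-collider on it is not in `S`. -/
def dConnectsPath (G : DAG p) (S : Finset (Fin p)) (l : List (Fin p)) : Prop :=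
  ∀ a b c : Fin p, [a, b, c] <:+: l →
    (G.isCollider a b c → G.ancestorOfSet b S) ∧ (¬ G.isCollider a b c → b ∉ S)

def dConnected (G : DAG p) (i j : Fin p) (S : Finset (Fin p)) : Prop :=
  ∃ l : List (Fin p), G.IsTrail i j l ∧ G.dConnectsPath S l

def dSep (G : DAG p) (i j : Fin p) (S : Finset (Fin p)) : Prop :=
  i ≠ j ∧ ¬ G.dConnected i j S

end DAG

/-- A (pairwise) conditional independence model: `CI i j S` means
`X_i ⫫ X_j | X_S`. -/
abbrev CIModel (p : ℕ) := Fin p → Fin p → Finset (Fin p) → Prop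

variable {p : ℕ}

/-- `G` is Markov w.r.t. the CI model: every d-separation is a CI statement. -/
def Markov (G : DAG p) (CI : CIModel p) : Prop :=
  ∀ i j S, G.dSep i j S → CI i j S

/-- Markov equivalence: same d-separation statements. -/
def MarkovEquiv (G G' : DAG p) : Prop :=
  ∀ i j S, G.dSep i j S ↔ G'.dSep i j S

/-- `π` is a topological ordering of `G`. -/
def IsTopOrder (G : DAG p) (π : Equiv.Perm (Fin p)) : Prop :=
  ∀ e ∈ G.edges, π.symm e.1 < π.symm e.2

/-- the predecessors `{π 0, …, π (k-1)}` of position `k` in the ordering `π` -/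
def predSet (π : Equiv.Perm (Fin p)) (k : Fin p) : Finset (Fin p) :=
  (Finset.univ.filter (fun m => m < k)).image π

/-- The minimal I-map `G_π`: for `j < k` there is an edge `π j → π k` iff
`π j` and `π k` are conditionally dependent given all other predecessors of `π k`. -/
noncomputable def minimalIMap (CI : CIModel p) (π : Equiv.Perm (Fin p)) : DAG p where
  edges := Finset.univ.filter (fun q : Fin p × Fin p =>
    ∃ j k : Fin p, j < k ∧ q = (π j, π k) ∧ ¬ CI (π j) (π k) ((predSet π k).erase (π j)))
  acyclic := ⟨π, by
    intro e he
    rw [Finset.mem_filter] at he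
    obtain ⟨-, j, k, hjk, rfl, -⟩ := he
    simpa using hjk⟩

/-- the minimal number of edges of a minimal I-map `G_π` over all permutations `π` -/
noncomputable def spScore (CI : CIModel p) : ℕ :=
  ((Finset.univ : Finset (Equiv.Perm (Fin p))).image
    (fun π => (minimalIMap CI π).edges.card)).min' (Finset.univ_nonempty.image _)

/-- adjacency-faithfulness: endpoints of edges of `G` are conditionally dependent
given any conditioning set. -/
def AdjFaithful (G : DAG p) (CI : CIModel p) : Prop :=
  ∀ e ∈ G.edges, ∀ S : Finset (Fin p), e.1 ∉ S → e.2 ∉ S →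
    ¬ CI e.1 e.2 S ∧ ¬ CI e.2 e.1 S

/-- the sparsest Markov representation assumption -/
def SMR (G : DAG p) (CI : CIModel p) : Prop :=
  Markov G CI ∧
    ∀ G' : DAG p, Markov G' CI → ¬ MarkovEquiv G' G → G.edges.card < G'.edges.card

/-- the set of d-separation statements of `G` -/
def DsepSet (G : DAG p) : Set (Fin p × Fin p × Finset (Fin p)) :=
  {t | G.dSep t.1 t.2.1 t.2.2}

/-- P-minimality: no Markov DAG entails strictly more d-separations. -/
def PMinimal (G : DAG p) (CI : CIModel p) : Prop :=
  ∀ G' : DAG p, Markov G' CI → ¬ (DsepSet G ⊂ DsepSet G')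

/-!
Reverse a d-connecting path so that it runs from `π j` to `π i`, and look at its first edge
`π j — b`. If `b → π j`, then `b` precedes `π j` and is not `π i`, so it lies in the
conditioning set `S`, although it is a non-collider. If `π j → b`, the path can never change
direction: a change would create a collider that is a descendant of `π j`, whereas colliders
must be ancestors of `S`, all of whose elements precede `π j`. So the path is directed and
`π j` is an ancestor of `π i`, contradicting `i < j`.
-/

namespace DAG

variable (G : DAG p)

theorem adj_comm {a b : Fin p} : G.adj a b ↔ G.adj b a := Or.comm

theorem isCollider_comm {a b c : Fin p} : G.isCollider a b c ↔ G.isCollider c b a := And.comm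

theorem ancestorOfSet_of_edge {a b : Fin p} {S : Finset (Fin p)} (hab : (a, b) ∈ G.edges)
    (hb : G.ancestorOfSet b S) : G.ancestorOfSet a S :=
  let ⟨s, hs, hbs⟩ := hb
  ⟨s, hs, hbs.head hab⟩

variable {G}

theorem IsTrail.reverse {i j : Fin p} {l : List (Fin p)} (h : G.IsTrail i j l) :
    G.IsTrail j i l.reverse := by
  obtain ⟨hchain, hnodup, hlen, hhead, hlast⟩ := h
  refine ⟨List.isChain_reverse.mpr (hchain.imp fun _ _ => G.adj_comm.mp),
    List.nodup_reverse.mpr hnodup, by simpa using hlen, ?_, ?_⟩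
  · rwa [List.head?_reverse]
  · rwa [List.getLast?_reverse]

theorem IsTrail.exists_eq_cons_cons_cons {i j : Fin p} {l : List (Fin p)} (h : G.IsTrail i j l)
    (hij : ¬ G.adj i j) : ∃ b c rest, l = i :: b :: c :: rest := by
  obtain ⟨hchain, -, hlen, hhead, hlast⟩ := h
  match l, hlen with
  | [a, b], _ =>
    obtain ⟨rfl, rfl⟩ : a = i ∧ b = j := by simp_all
    exact absurd (List.isChain_pair.mp hchain) hij
  | a :: b :: c :: rest, _ =>
    obtain rfl : a = i := by simpa using hhead
    exact ⟨b, c, rest, rfl⟩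

theorem dConnectsPath.reverse {S : Finset (Fin p)} {l : List (Fin p)}
    (h : G.dConnectsPath S l) : G.dConnectsPath S l.reverse := by
  intro a b c habc
  have hcba : [c, b, a] <:+: l := List.reverse_infix.mp (by simpa using habc)
  simpa only [G.isCollider_comm] using h c b a hcba

theorem dConnectsPath.of_cons {S : Finset (Fin p)} {a : Fin p} {l : List (Fin p)}
    (h : G.dConnectsPath S (a :: l)) : G.dConnectsPath S l :=
  fun x y z hxyz => h x y z (List.infix_cons hxyz)

theorem dConnected.symm {i j : Fin p} {S : Finset (Fin p)} (h : G.dConnected i j S) :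
    G.dConnected j i S :=
  let ⟨l, hl, hdc⟩ := h
  ⟨l.reverse, hl.reverse, hdc.reverse⟩

theorem isChain_edgeRel_of_dConnectsPath {S : Finset (Fin p)} {a b : Fin p} {l : List (Fin p)}
    (hadj : (b :: l).IsChain G.adj) (hdc : G.dConnectsPath S (a :: b :: l))
    (hab : (a, b) ∈ G.edges) (ha : ¬ G.ancestorOfSet a S) :
    (a :: b :: l).IsChain G.edgeRel := by
  induction l generalizing a b with
  | nil => exact List.isChain_pair.mpr hab
  | cons c l ih =>
    obtain ⟨hbc | hcb, hadj⟩ := List.isChain_cons_cons.mp hadj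
    · have hb : ¬ G.ancestorOfSet b S := fun hb => ha (G.ancestorOfSet_of_edge hab hb)
      exact List.isChain_cons_cons.mpr ⟨hab, ih hadj hdc.of_cons hbc hb⟩
    · have hcol : G.isCollider a b c := ⟨hab, hcb⟩
      have hb := (hdc a b c (List.IsPrefix.isInfix ⟨l, rfl⟩)).1 hcol
      exact absurd (G.ancestorOfSet_of_edge hab hb) ha

end DAG

theorem mem_predSet {π : Equiv.Perm (Fin p)} {k a : Fin p} :
    a ∈ predSet π k ↔ π.symm a < k := by
  simp [predSet, ← Equiv.eq_symm_apply]

namespace IsTopOrder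

variable {G : DAG p} {π : Equiv.Perm (Fin p)}

theorem le_of_reflTransGen (h : IsTopOrder G π) {a b : Fin p}
    (hab : Relation.ReflTransGen G.edgeRel a b) : π.symm a ≤ π.symm b := by
  induction hab with
  | refl => rfl
  | tail _ hbc ih => exact ih.trans (h _ hbc).le

theorem lt_of_ancestorOfSet (h : IsTopOrder G π) {b k : Fin p} {S : Finset (Fin p)}
    (hS : ∀ s ∈ S, π.symm s < k) (hb : G.ancestorOfSet b S) : π.symm b < k :=
  let ⟨s, hs, hbs⟩ := hb
  (h.le_of_reflTransGen hbs).trans_lt (hS s hs)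

end IsTopOrder

/-- In a DAG `G` with topological ordering `π`, any two non-adjacent vertices
`π i` and `π j` with `i < j` are d-separated by the set of all predecessors of
`π j` other than `π i`. -/
theorem dSep_of_nonadjacent_predecessors (G : DAG p) (π : Equiv.Perm (Fin p))
    (htop : IsTopOrder G π) (i j : Fin p) (hij : i < j)
    (hnadj : ¬ G.adj (π i) (π j)) :
    G.dSep (π i) (π j) ((predSet π j).erase (π i)) := by
  set S := (predSet π j).erase (π i)
  have hS : ∀ s ∈ S, π.symm s < j := fun s hs => mem_predSet.mp (Finset.mem_of_mem_erase hs)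
  refine ⟨π.injective.ne hij.ne, fun hcon => ?_⟩
  obtain ⟨l, hl, hdc⟩ := hcon.symm
  obtain ⟨b, c, rest, rfl⟩ := hl.exists_eq_cons_cons_cons fun h => hnadj (G.adj_comm.mp h)
  obtain ⟨hchain, hnodup, -, -, hlast⟩ := hl
  rcases (List.isChain_cons_cons.mp hchain).1 with hjb | hbj
  · have hj : ¬ G.ancestorOfSet (π j) S := fun h => (htop.lt_of_ancestorOfSet hS h).ne (by simp)
    have hdir :=
      G.isChain_edgeRel_of_dConnectsPath (List.isChain_cons_cons.mp hchain).2 hdc hjb hj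
    have hji := htop.le_of_reflTransGen <|
      List.relationReflTransGen_of_exists_isChain_cons _ hdir
        ((List.getLast_eq_iff_getLast?_eq_some _).mpr hlast)
    exact absurd hij (by simpa using hji)
  · have hbi : b ≠ π i := fun h =>
      (List.nodup_cons.mp (List.nodup_cons.mp hnodup).2).1 (h ▸ List.mem_of_getLast? hlast)
    have hbS : b ∈ S :=
      Finset.mem_erase.mpr ⟨hbi, mem_predSet.mpr (by simpa using htop _ hbj)⟩
    have hnc : ¬ G.isCollider (π j) b c := fun hcol => lt_asymm (htop _ hbj) (htop _ hcol.1)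
    exact (hdc _ _ _ (List.IsPrefix.isInfix ⟨rest, rfl⟩)).2 hnc hbS
end

section
/- If two DAGs G and G' on the same vertex set have identical skeletons but G' contains a v-structure i → k ← j that is not a v-structure in G, then there exists a subset S containing k such that i and j are d-separated given S in G but d-connected given S in G'; consequently D_sep(G) is not a subset of D_sep(G'). -/
open scoped Classical

variable {p : ℕ}

/-- `(i, k, j)` is a v-structure: `i → k ← j` with `i`, `j` non-adjacent. -/
def IsVStructure (G : DAG p) (i k j : Fin p) : Prop :=
  (i, k) ∈ G.edges ∧ (j, k) ∈ G.edges ∧ ¬ G.adj i j ∧ i ≠ j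

/-! In `G'` the collider `k` of `i → k ← j` lies in `S`, so the path `i - k - j` is open given any
`S ∋ k`. In `G` the triple is unshielded but not a collider, so `k` points into one of `i`, `j`,
say `k → b`, and `b` can be chosen not to be an ancestor of the other endpoint `a` (otherwise
acyclicity fails). The local Markov property then separates `a` and `b` by the parents of `b`,
a set containing `k`. -/

namespace DAG

theorem not_transGen_self (G : DAG p) (a : Fin p) : ¬ Relation.TransGen G.edgeRel a a := by
  obtain ⟨σ, hσ⟩ := G.acyclic
  suffices ∀ {a b}, Relation.TransGen G.edgeRel a b → σ.symm a < σ.symm b from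
    fun h => lt_irrefl _ (this h)
  intro a b hab
  induction hab with
  | single hab => exact hσ _ hab
  | tail _ hbc ih => exact ih.trans (hσ _ hbc)

theorem ne_of_mem_edges (G : DAG p) {a b : Fin p} (h : (a, b) ∈ G.edges) : a ≠ b := by
  rintro rfl
  exact G.not_transGen_self a (.single h)

theorem mem_skeleton (G : DAG p) (a b : Fin p) : s(a, b) ∈ G.skeleton ↔ G.adj a b := by
  simp only [skeleton, adj, Finset.mem_image, Prod.exists, Sym2.eq_iff]
  constructor
  · rintro ⟨x, y, hxy, ⟨rfl, rfl⟩ | ⟨rfl, rfl⟩⟩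
    exacts [.inl hxy, .inr hxy]
  · rintro (hab | hba)
    exacts [⟨a, b, hab, .inl ⟨rfl, rfl⟩⟩, ⟨b, a, hba, .inr ⟨rfl, rfl⟩⟩]

theorem adj_iff_of_skeleton_eq {G G' : DAG p} (h : G.skeleton = G'.skeleton) (a b : Fin p) :
    G.adj a b ↔ G'.adj a b := by
  rw [← mem_skeleton, ← mem_skeleton, h]

theorem dConnected_symm (G : DAG p) {i j : Fin p} {S : Finset (Fin p)}
    (h : G.dConnected i j S) : G.dConnected j i S := by
  obtain ⟨l, ⟨hchain, hnodup, hlen, hhead, hlast⟩, hpath⟩ := h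
  refine ⟨l.reverse, ⟨?_, List.nodup_reverse.2 hnodup, by simpa using hlen, by simpa using hlast,
    by simpa using hhead⟩, fun a b c habc => ?_⟩
  · exact List.isChain_reverse.2 (hchain.imp fun _ _ h => h.symm)
  · rw [show G.isCollider a b c ↔ G.isCollider c b a from and_comm]
    exact hpath c b a (List.reverse_infix.1 (by simpa using habc))

theorem dSep_symm (G : DAG p) {i j : Fin p} {S : Finset (Fin p)} (h : G.dSep i j S) :
    G.dSep j i S :=
  ⟨h.1.symm, fun hc => h.2 (G.dConnected_symm hc)⟩

theorem dConnected_of_isCollider (G : DAG p) {i k j : Fin p} {S : Finset (Fin p)}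
    (hcol : G.isCollider i k j) (hij : i ≠ j) (hk : k ∈ S) : G.dConnected i j S := by
  refine ⟨[i, k, j], ⟨?_, ?_, by simp, rfl, rfl⟩, fun a b c habc => ?_⟩
  · exact List.isChain_cons_cons.2 ⟨.inl hcol.1, List.isChain_pair.2 (.inr hcol.2)⟩
  · simp [G.ne_of_mem_edges hcol.1, hij, (G.ne_of_mem_edges hcol.2).symm]
  · obtain ⟨rfl, rfl, rfl⟩ : a = i ∧ b = k ∧ c = j := by
      simpa using habc.sublist.eq_of_length (by simp)
    exact ⟨fun _ => ⟨_, hk, .refl⟩, fun h => absurd hcol h⟩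

noncomputable def parents (G : DAG p) (j : Fin p) : Finset (Fin p) :=
  Finset.univ.filter fun a => (a, j) ∈ G.edges

@[simp]
theorem mem_parents {G : DAG p} {a j : Fin p} : a ∈ G.parents j ↔ (a, j) ∈ G.edges := by
  simp [parents]

theorem transGen_or_exists_isCollider (G : DAG p) :
    ∀ {l : List (Fin p)} {b c e : Fin p}, (b, c) ∈ G.edges → (c :: l).IsChain G.adj →
      (c :: l).getLast? = some e →
      Relation.TransGen G.edgeRel b e ∨ ∃ x y z, [x, y, z] <:+: b :: c :: l ∧
        G.isCollider x y z ∧ Relation.TransGen G.edgeRel b y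
  | [], b, c, e, hbc, _, hlast => by
    obtain rfl : c = e := by simpa using hlast
    exact .inl (.single hbc)
  | d :: l, b, c, e, hbc, hchain, hlast => by
    rw [List.isChain_cons_cons] at hchain
    rcases hchain.1 with hcd | hdc
    · rcases G.transGen_or_exists_isCollider hcd hchain.2 (by simpa using hlast) with
        hce | ⟨x, y, z, hxyz, hcol, hcy⟩
      · exact .inl (.head hbc hce)
      · exact .inr ⟨x, y, z, hxyz.trans (List.suffix_cons b _).isInfix, hcol, .head hbc hcy⟩
    · exact .inr ⟨b, c, d, ⟨[], l, rfl⟩, ⟨hbc, hdc⟩, .single hbc⟩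

/-- The local Markov property. -/
theorem dSep_parents (G : DAG p) {i j : Fin p} (hij : i ≠ j) (hij' : (i, j) ∉ G.edges)
    (hji : ¬ Relation.TransGen G.edgeRel j i) : G.dSep i j (G.parents j) := by
  refine ⟨hij, fun hconn => ?_⟩
  obtain ⟨l, ⟨hchain, -, hlen, hhead, hlast⟩, hpath⟩ := G.dConnected_symm hconn
  rcases l with _ | ⟨x, _ | ⟨v, rest⟩⟩
  · simp at hlen
  · simp at hlen
  obtain rfl : j = x := by simpa using hhead.symm
  -- A trail leaving `j` forwards is directed to `i` or has a collider below `j`, which cannot be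
  -- an ancestor of a parent of `j`; a trail leaving `j` backwards passes a parent as a non-collider.
  obtain ⟨hjv_adj, hchain⟩ := List.isChain_cons_cons.1 hchain
  rcases hjv_adj with hjv | hvj
  · rcases G.transGen_or_exists_isCollider hjv hchain (by simpa using hlast) with
      hji' | ⟨a, y, c, hayc, hcol, hjy⟩
    · exact hji hji'
    · obtain ⟨s, hs, hys⟩ := (hpath a y c hayc).1 hcol
      exact G.not_transGen_self j ((hjy.trans_left hys).tail (mem_parents.1 hs))
  · rcases rest with _ | ⟨d, rest⟩
    · obtain rfl : v = i := by simpa using hlast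
      exact hij' hvj
    · refine (hpath j v d ⟨[], rest, rfl⟩).2 (fun hcol => ?_) (mem_parents.2 hvj)
      exact G.not_transGen_self j ((Relation.TransGen.single hcol.1).tail hvj)

theorem exists_mem_dSep_of_edge (G : DAG p) {i k j : Fin p} (hkj : (k, j) ∈ G.edges)
    (hik : G.adj i k) (hij : ¬ G.adj i j) (hne : i ≠ j) : ∃ S, k ∈ S ∧ G.dSep i j S := by
  by_cases hji : Relation.TransGen G.edgeRel j i
  · have hki : (k, i) ∈ G.edges := hik.resolve_left fun hik =>
      G.not_transGen_self i (.head hik (.head hkj hji))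
    refine ⟨G.parents i, mem_parents.2 hki, G.dSep_symm (G.dSep_parents hne.symm
      (fun h => hij (.inr h)) fun hanc => G.not_transGen_self i (hanc.trans hji))⟩
  · exact ⟨G.parents j, mem_parents.2 hkj, G.dSep_parents hne (fun h => hij (.inl h)) hji⟩

theorem exists_mem_dSep_of_not_isCollider (G : DAG p) {i k j : Fin p} (hik : G.adj i k)
    (hjk : G.adj j k) (hij : ¬ G.adj i j) (hne : i ≠ j) (hcol : ¬ G.isCollider i k j) :
    ∃ S, k ∈ S ∧ G.dSep i j S := by
  rcases hjk with hjk | hkj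
  · have hki : (k, i) ∈ G.edges := hik.resolve_left fun hik => hcol ⟨hik, hjk⟩
    obtain ⟨S, hkS, hsep⟩ :=
      G.exists_mem_dSep_of_edge hki (.inl hjk) (fun h => hij h.symm) hne.symm
    exact ⟨S, hkS, G.dSep_symm hsep⟩
  · exact G.exists_mem_dSep_of_edge hkj hik hij hne

end DAG

/-- If `G` and `G'` have identical skeletons but `G'` contains a v-structure
`i → k ← j` not present in `G`, then some set `S` containing `k` d-separates `i`
and `j` in `G` but d-connects them in `G'`; consequently the d-separation
statements of `G` are not a subset of those of `G'`. -/
theorem vStructure_dsep_incomparable (G G' : DAG p)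
    (hskel : G.skeleton = G'.skeleton) (i k j : Fin p)
    (hv' : IsVStructure G' i k j) (hv : ¬ IsVStructure G i k j) :
    (∃ S : Finset (Fin p), k ∈ S ∧ G.dSep i j S ∧ G'.dConnected i j S) ∧
      ¬ DsepSet G ⊆ DsepSet G' := by
  obtain ⟨hik', hjk', hij', hne⟩ := hv'
  have hadj := DAG.adj_iff_of_skeleton_eq hskel
  obtain ⟨S, hkS, hsep⟩ := G.exists_mem_dSep_of_not_isCollider ((hadj i k).2 (.inl hik'))
    ((hadj j k).2 (.inl hjk')) (mt (hadj i j).1 hij') hne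
    fun hcol => hv ⟨hcol.1, hcol.2, mt (hadj i j).1 hij', hne⟩
  have hconn : G'.dConnected i j S := G'.dConnected_of_isCollider ⟨hik', hjk'⟩ hne hkS
  exact ⟨⟨S, hkS, hsep, hconn⟩, fun hsub => (@hsub (i, j, S) hsep).2 hconn⟩
end

section
/- If the SGS algorithm applied to a (possibly erroneous) set of inferred CI relations recovers the true skeleton S(G*), and there exists a permutation π with |S(Ĝ_π)| ≤ |S(G*)| (where Ĝ_π is the minimal I-map for π built from the same inferred CI relations), then every output of the SP algorithm on these inferred CI relations has skeleton equal to S(G*). -/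
open scoped Classical

variable {p : ℕ}

/-- `j` and `k` are adjacent in the skeleton output by the SGS algorithm: no
conditioning set renders them (inferred) conditionally independent. -/
def sgsAdj (CI : CIModel p) (j k : Fin p) : Prop :=
  j ≠ k ∧ ∀ S : Finset (Fin p), j ∉ S → k ∉ S → ¬ CI j k S ∧ ¬ CI k j S

lemma DAG.skeleton_card (G : DAG p) : G.skeleton.card = G.edges.card := by
  apply Finset.card_image_of_injOn
  intro e he f hf hef
  obtain ⟨σ, hσ⟩ := G.acyclic
  simp only [Sym2.eq, Sym2.rel_iff', Prod.mk.injEq, Prod.swap_prod_mk] at hef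
  rcases hef with ⟨h1, h2⟩ | ⟨h1, h2⟩
  · exact Prod.ext h1 h2
  · exfalso
    have h3 := hσ e he
    have h4 := hσ f hf
    rw [h1, h2] at h3
    exact absurd (h3.trans h4) (lt_irrefl _)

lemma minimalIMap_skeleton_superset (CI : CIModel p) (G : DAG p)
    (hSGS : ∀ j k : Fin p, sgsAdj CI j k ↔ G.adj j k) (π : Equiv.Perm (Fin p)) :
    G.skeleton ⊆ (minimalIMap CI π).skeleton := by
  intro s hs
  rw [DAG.skeleton, Finset.mem_image] at hs
  obtain ⟨e, he, rfl⟩ := hs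
  have hadj : G.adj e.1 e.2 := Or.inl he
  have hsgs : sgsAdj CI e.1 e.2 := (hSGS e.1 e.2).mpr hadj
  obtain ⟨hne, hS⟩ := hsgs
  set j := π.symm e.1 with hj
  set k := π.symm e.2 with hk
  have hje : π j = e.1 := π.apply_symm_apply e.1
  have hke : π k = e.2 := π.apply_symm_apply e.2
  have hjk : j ≠ k := fun h => hne (by rw [← hje, ← hke, h])
  have hnotmem : ∀ (b : Fin p), b ∉ predSet π (π.symm b) := by
    intro b hmem
    rw [predSet, Finset.mem_image] at hmem
    obtain ⟨m, hm, hmb⟩ := hmem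
    rw [Finset.mem_filter] at hm
    have : m = π.symm b := by rw [← hmb]; simp
    exact absurd hm.2 (by rw [this]; exact lt_irrefl _)
  rcases lt_or_gt_of_ne hjk with h | h
  · -- edge (e.1, e.2) = (π j, π k)
    have hmem : (e.1, e.2) ∈ (minimalIMap CI π).edges := by
      rw [minimalIMap, Finset.mem_filter]
      refine ⟨Finset.mem_univ _, j, k, h, by rw [hje, hke], ?_⟩
      rw [hje, hke]
      have h1 : e.1 ∉ (predSet π k).erase e.1 := Finset.notMem_erase _ _
      have h2 : e.2 ∉ (predSet π k).erase e.1 := by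
        intro hmem
        exact hnotmem e.2 (hk ▸ Finset.mem_of_mem_erase hmem)
      exact (hS _ h1 h2).1
    exact Finset.mem_image_of_mem _ hmem
  · -- edge (e.2, e.1) = (π k, π j)
    have hmem : (e.2, e.1) ∈ (minimalIMap CI π).edges := by
      rw [minimalIMap, Finset.mem_filter]
      refine ⟨Finset.mem_univ _, k, j, h, by rw [hje, hke], ?_⟩
      rw [hje, hke]
      have h1 : e.2 ∉ (predSet π j).erase e.2 := Finset.notMem_erase _ _
      have h2 : e.1 ∉ (predSet π j).erase e.2 := by
        intro hmem
        exact hnotmem e.1 (hj ▸ Finset.mem_of_mem_erase hmem)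
      exact (hS _ h2 h1).2
    have : s(e.2, e.1) = s(e.1, e.2) := Sym2.eq_swap
    rw [← this]
    exact Finset.mem_image_of_mem _ hmem

lemma spScore_le (CI : CIModel p) (π : Equiv.Perm (Fin p)) :
    spScore CI ≤ (minimalIMap CI π).edges.card := by
  apply Finset.min'_le
  exact Finset.mem_image_of_mem _ (Finset.mem_univ π)

/-- If the SGS algorithm applied to the inferred CI relations recovers the true
skeleton of `G`, and some permutation `π` yields a minimal I-map with at most as
many edges as `G`, then every output of the SP algorithm on the inferred CI
relations has skeleton equal to that of `G`. -/
theorem sp_skeleton_of_sgs_success (CI : CIModel p) (G : DAG p)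
    (hSGS : ∀ j k : Fin p, sgsAdj CI j k ↔ G.adj j k)
    (hEx : ∃ π : Equiv.Perm (Fin p), (minimalIMap CI π).edges.card ≤ G.edges.card) :
    ∀ π : Equiv.Perm (Fin p), (minimalIMap CI π).edges.card = spScore CI →
      (minimalIMap CI π).skeleton = G.skeleton := by
  intro π hπ
  obtain ⟨π0, hπ0⟩ := hEx
  have hsub := minimalIMap_skeleton_superset CI G hSGS π
  have hcard : (minimalIMap CI π).skeleton.card ≤ G.skeleton.card := by
    rw [DAG.skeleton_card, DAG.skeleton_card, hπ]
    exact le_trans (spScore_le CI π0) hπ0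
  exact (Finset.eq_of_subset_of_card_le hsub hcard).symm
end
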